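/- arXiv:2207.02540 — 5 statements merged into one kernel-verified Lean document; each statement's English description precedes it below -/
import Mathlib

section
/- For all x ≥ 0, the trigamma function satisfies ψ'(x+1) < (x+2)/(x+1)^2, where ψ' is the derivative of the digamma function. -/
open Real Filter Topology Finset

/-- The digamma function `ψ(x) = Γ'(x)/Γ(x)`. -/
noncomputable def digamma (x : ℝ) : ℝ := deriv (fun y : ℝ => Real.log (Real.Gamma y)) x

/-- The trigamma function `ψ'`, the derivative of the digamma function. -/
noncomputable def trigamma (x : ℝ) : ℝ := deriv digamma x

/-- For all `x ≥ 0`, `ψ'(x+1) < (x+2)/(x+1)^2`. -/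
theorem stmt2 (x : ℝ) (hx : 0 ≤ x) : trigamma (x + 1) < (x + 2) / (x + 1) ^ 2 := by
  set t : ℝ := x + 1 with ht
  have ht0 : (0:ℝ) < t := by simp only [ht]; linarith
  have ht1 : (1:ℝ) ≤ t := by simp only [ht]; linarith
  set S : Set ℝ := Set.Ioo (1/2 : ℝ) (x + 2) with hS
  have hSopen : IsOpen S := isOpen_Ioo
  have htS : t ∈ S := ⟨by simp only [ht]; linarith, by simp only [ht]; linarith⟩
  have hy0 : ∀ y ∈ S, 0 < y := fun y hy => lt_trans (by norm_num) hy.1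
  -- the approximating sequences and their limits
  set F : ℕ → ℝ → ℝ := fun n y =>
    y * Real.log n + Real.log (Nat.factorial n : ℝ) - ∑ m ∈ Finset.range (n+1), Real.log (y + m) with hF
  set F1 : ℕ → ℝ → ℝ := fun n y =>
    Real.log n - ∑ m ∈ Finset.range (n+1), (y + m)⁻¹ with hF1
  set F2 : ℕ → ℝ → ℝ := fun n y => ∑ m ∈ Finset.range (n+1), ((y + m)^2)⁻¹ with hF2
  set v : ℕ → ℝ → ℝ := fun m y => ((m:ℝ)+1)⁻¹ - (y + m + 1)⁻¹ with hv
  set g1 : ℝ → ℝ := fun y => -eulerMascheroniConstant + -y⁻¹ + ∑' m : ℕ, v m y with hg1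
  set g2 : ℝ → ℝ := fun y => ∑' m : ℕ, ((y + m)^2)⁻¹ with hg2
  -- basic summability
  have hbase : Summable (fun m : ℕ => (((m:ℝ)+1)^2)⁻¹) := by
    have h := (summable_nat_add_iff (f := fun n : ℕ => ((n : ℝ) ^ 2)⁻¹) 1).mpr
      (Real.summable_nat_pow_inv.mpr one_lt_two)
    refine h.congr fun n => ?_
    push_cast
    ring
  -- derivatives of F
  have hder1 : ∀ n : ℕ, ∀ y ∈ S, HasDerivAt (F n) (F1 n y) y := by
    intro n y hy
    have hy' := hy0 y hy
    have h1 : HasDerivAt (fun z : ℝ => z * Real.log n + Real.log (Nat.factorial n : ℝ)) (Real.log n) y := by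
      simpa using ((hasDerivAt_id y).mul_const (Real.log n)).add_const (Real.log (Nat.factorial n : ℝ))
    have h2 : HasDerivAt (fun z : ℝ => ∑ m ∈ Finset.range (n+1), Real.log (z + m))
        (∑ m ∈ Finset.range (n+1), (y + m)⁻¹) y := by
      apply HasDerivAt.fun_sum
      intro m _
      have hpos : (0:ℝ) < y + m := by positivity
      simpa using (((hasDerivAt_id y).add_const (m:ℝ)).log hpos.ne')
    exact h1.sub h2
  have hder2 : ∀ n : ℕ, ∀ y ∈ S, HasDerivAt (F1 n) (F2 n y) y := by
    intro n y hy
    have hy' := hy0 y hy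
    have h2 : HasDerivAt (fun z : ℝ => ∑ m ∈ Finset.range (n+1), (z + m)⁻¹)
        (∑ m ∈ Finset.range (n+1), -((y + m)^2)⁻¹) y := by
      apply HasDerivAt.fun_sum
      intro m _
      have hpos : (0:ℝ) < y + m := by positivity
      have := ((hasDerivAt_id y).add_const (m:ℝ)).inv hpos.ne'
      refine this.congr_deriv ?_
      simp [div_eq_mul_inv]
    have := (hasDerivAt_const y (Real.log n)).sub h2
    refine this.congr_deriv ?_
    simp [hF2, Finset.sum_neg_distrib]
  -- uniform convergence of F2 to g2 on S
  have hbound2 : ∀ (m : ℕ), ∀ y ∈ S, ‖((y + m)^2)⁻¹‖ ≤ 4 * (((m:ℝ)+1)^2)⁻¹ := by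
    intro m y hy
    have h1 : ((m:ℝ)+1)/2 ≤ y + m := by
      have := hy.1
      linarith
    have h2 : (0:ℝ) < y + m := lt_of_lt_of_le (by positivity) h1
    rw [Real.norm_eq_abs, abs_of_pos (by positivity)]
    have h3 : (((m:ℝ)+1)^2) ≤ 4 * (y + m)^2 := by nlinarith
    have h4 : (0:ℝ) < ((m:ℝ)+1)^2 := by positivity
    have h5 : (0:ℝ) < (((m:ℝ)+1)^2)⁻¹ := by positivity
    rw [inv_le_iff_one_le_mul₀ (by positivity)]
    nlinarith [mul_le_mul_of_nonneg_left h3 h5.le, mul_inv_cancel₀ (ne_of_gt h4)]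
  have hT2 : TendstoUniformlyOn (fun (n : ℕ) (y : ℝ) => ∑ m ∈ Finset.range n, ((y + m)^2)⁻¹) g2 atTop S :=
    tendstoUniformlyOn_tsum_nat (hbase.mul_left 4) hbound2
  have hunif2 : TendstoUniformlyOn F2 g2 atTop S := by
    intro u hu
    exact (tendsto_add_atTop_nat 1).eventually (hT2 u hu)
  -- uniform convergence of F1 to g1 on S
  have hboundv : ∀ (m : ℕ), ∀ y ∈ S, ‖v m y‖ ≤ (x + 2) * (((m:ℝ)+1)^2)⁻¹ := by
    intro m y hy
    have hy' := hy0 y hy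
    have h0 : (0:ℝ) < (m:ℝ) + 1 := by positivity
    have h1 : (0:ℝ) < y + m + 1 := by positivity
    have heq : v m y = y / (((m:ℝ)+1) * (y + m + 1)) := by
      simp only [hv]
      field_simp
      try ring
    rw [heq, Real.norm_eq_abs, abs_of_nonneg (by positivity)]
    have hle : y / (((m:ℝ)+1) * (y + m + 1)) ≤ (x+2) / (((m:ℝ)+1) * ((m:ℝ)+1)) := by
      apply div_le_div₀ (by linarith) (le_of_lt hy.2) (by positivity)
      have : ((m:ℝ)+1) ≤ y + m + 1 := by linarith
      nlinarith
    calc y / (((m:ℝ)+1) * (y + m + 1)) ≤ (x+2) / (((m:ℝ)+1) * ((m:ℝ)+1)) := hle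
      _ = (x + 2) * (((m:ℝ)+1)^2)⁻¹ := by rw [sq]; ring
  have hTv : TendstoUniformlyOn (fun (n : ℕ) (y : ℝ) => ∑ m ∈ Finset.range n, v m y)
      (fun y => ∑' m : ℕ, v m y) atTop S :=
    tendstoUniformlyOn_tsum_nat (hbase.mul_left (x+2)) hboundv
  have hc : Tendsto (fun n : ℕ => Real.log n - (harmonic n : ℝ)) atTop
      (𝓝 (-eulerMascheroniConstant)) := by
    have := Real.tendsto_harmonic_sub_log.neg
    simpa [neg_sub] using this
  have hconst : TendstoUniformlyOn (fun (n : ℕ) (_ : ℝ) => Real.log n - (harmonic n : ℝ))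
      (fun _ => -eulerMascheroniConstant) atTop S := hc.tendstoUniformlyOn_const S
  have hinv : TendstoUniformlyOn (fun (_ : ℕ) (y : ℝ) => -y⁻¹) (fun y => -y⁻¹) atTop S :=
    fun u hu => Eventually.of_forall (fun n y _ => refl_mem_uniformity hu)
  have hT1' : TendstoUniformlyOn
      (fun (n : ℕ) (y : ℝ) => (Real.log n - (harmonic n : ℝ) + -y⁻¹) + ∑ m ∈ Finset.range n, v m y)
      (fun y => (-eulerMascheroniConstant + -y⁻¹) + ∑' m : ℕ, v m y) atTop S :=
    (hconst.add hinv).add hTv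
  have hunif1 : TendstoUniformlyOn F1 g1 atTop S := by
    refine hT1'.congr (Eventually.of_forall fun n y hy => ?_)
    have hh : ((harmonic n : ℚ) : ℝ) = ∑ m ∈ Finset.range n, ((m:ℝ)+1)⁻¹ := by
      rw [harmonic]
      push_cast
      rfl
    simp only [hF1, hv]
    rw [Finset.sum_sub_distrib, hh, Finset.sum_range_succ']
    push_cast
    simp only [add_zero, ← add_assoc]
    ring
  -- pointwise convergence of F to log ∘ Gamma
  have hFpt : ∀ y ∈ S, Tendsto (fun n => F n y) atTop (𝓝 (Real.log (Real.Gamma y))) := by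
    intro y hy
    exact Real.BohrMollerup.tendsto_log_gamma (hy0 y hy)
  -- conclude derivatives of limits
  have hg1d : ∀ y ∈ S, HasDerivAt (fun z : ℝ => Real.log (Real.Gamma z)) (g1 y) y := by
    intro y hy
    exact hasDerivAt_of_tendstoUniformlyOn hSopen hunif1
      (Eventually.of_forall fun n z hz => hder1 n z hz) hFpt hy
  have hg2d : ∀ y ∈ S, HasDerivAt g1 (g2 y) y := by
    intro y hy
    exact hasDerivAt_of_tendstoUniformlyOn hSopen hunif2
      (Eventually.of_forall fun n z hz => hder2 n z hz)
      (fun z hz => hunif1.tendsto_at hz) hy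
  have hdig : Set.EqOn digamma g1 S := fun y hy => (hg1d y hy).deriv
  have htri : trigamma t = g2 t := by
    have h1 : digamma =ᶠ[𝓝 t] g1 := Filter.eventuallyEq_of_mem (hSopen.mem_nhds htS) hdig
    rw [trigamma, h1.deriv_eq, (hg2d t htS).deriv]
  -- final estimate: g2 t < 1/t^2 + 1/t
  have hsum_t : Summable (fun m : ℕ => ((t + m)^2)⁻¹) := by
    apply Summable.of_nonneg_of_le (fun m => by positivity) _ hbase
    intro m
    have h1 : ((m:ℝ)+1) ≤ t + m := by linarith
    have h2 : (0:ℝ) < (m:ℝ)+1 := by positivity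
    apply inv_anti₀ (by positivity)
    nlinarith
  have htend : Tendsto (fun n => ∑ m ∈ Finset.range n, ((t + m)^2)⁻¹) atTop (𝓝 (g2 t)) :=
    hsum_t.hasSum.tendsto_sum_nat
  set δ : ℝ := (t*(t+1))⁻¹ - ((t+1)^2)⁻¹ with hδdef
  have hδ : 0 < δ := by
    rw [hδdef, sub_pos]
    apply inv_strictAnti₀ (by positivity)
    nlinarith
  have hQ : ∀ k : ℕ, ∑ m ∈ Finset.range (k+2), ((t + m)^2)⁻¹
      ≤ (t^2)⁻¹ + t⁻¹ - δ - (t + k + 1)⁻¹ := by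
    intro k
    induction k with
    | zero =>
      rw [Finset.sum_range_succ, Finset.sum_range_one]
      push_cast
      have key : t⁻¹ - (t*(t+1))⁻¹ - (t+1)⁻¹ = 0 := by
        field_simp
        ring
      rw [hδdef]
      ring_nf
      ring_nf at key
      linarith [key]
    | succ k ih =>
      rw [show k + 1 + 2 = (k + 2) + 1 by ring, Finset.sum_range_succ]
      have hp1 : (0:ℝ) < t + k + 1 := by positivity
      have hp2 : (0:ℝ) < t + k + 2 := by positivity
      have key1 : (t + (↑(k+2):ℝ))^2 = (t + k + 2)^2 := by push_cast; ring
      have key2 : ((t + k + 2)^2)⁻¹ ≤ (t + k + 1)⁻¹ - (t + k + 2)⁻¹ := by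
        have heq : (t + k + 1)⁻¹ - (t + k + 2)⁻¹ = ((t + k + 1) * (t + k + 2))⁻¹ := by
          field_simp
          try ring
        rw [heq]
        apply inv_anti₀ (by positivity)
        nlinarith
      have : (t + (↑(k+1):ℝ) + 1)⁻¹ = (t + k + 2)⁻¹ := by push_cast; ring_nf
      rw [key1, this]
      linarith
  have hev : ∀ᶠ n in atTop, ∑ m ∈ Finset.range n, ((t + m)^2)⁻¹ ≤ (t^2)⁻¹ + t⁻¹ - δ := by
    filter_upwards [eventually_ge_atTop 2] with n hn
    obtain ⟨k, rfl⟩ := Nat.exists_eq_add_of_le hn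
    have h1 := hQ k
    have h2 : (0:ℝ) < (t + k + 1)⁻¹ := by positivity
    calc ∑ m ∈ Finset.range (2+k), ((t + m)^2)⁻¹
        = ∑ m ∈ Finset.range (k+2), ((t + m)^2)⁻¹ := by rw [Nat.add_comm 2 k]
      _ ≤ (t^2)⁻¹ + t⁻¹ - δ - (t + k + 1)⁻¹ := h1
      _ ≤ (t^2)⁻¹ + t⁻¹ - δ := by linarith
  have hle : g2 t ≤ (t^2)⁻¹ + t⁻¹ - δ := le_of_tendsto htend hev
  have hfin : g2 t < (t^2)⁻¹ + t⁻¹ := lt_of_le_of_lt hle (sub_lt_self _ hδ)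
  have hrhs : (x + 2) / t ^ 2 = (t^2)⁻¹ + t⁻¹ := by
    have hx2 : x + 2 = t + 1 := by rw [ht]; ring
    rw [hx2]
    field_simp
    ring
  rw [htri, hrhs]
  exact hfin
end

section
/- Define p_K = (2π/(K+2))·(2π^{K/2}/(K·Γ(K/2)))^{−2/K} for positive integers K. Then p_K is decreasing in K, i.e., p_{K+1} ≤ p_K for all K ≥ 1. -/
open Real Filter Finset

lemma logle {u : ℝ} (hu : 0 < 1 + u) : Real.log (1 + u) ≤ u := by
  have := Real.log_le_sub_one_of_pos hu; linarith

lemma lemA {x m : ℝ} (hx : 0 < x) (hm : 1 ≤ m) :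
    Real.log (x + 1 + m) - Real.log (1 + m) - x / (x + 1 + m) ≤
      (m + 1) * Real.log (1 + x / (m + 1)) - m * Real.log (1 + x / m) := by
  have hm0 : 0 < m := by linarith
  have h1 : Real.log (x + 1 + m) - Real.log (1 + m) = Real.log (1 + x / (m + 1)) := by
    rw [← Real.log_div (by positivity) (by positivity)]
    congr 1
    field_simp
    ring
  set u : ℝ := x / (m * (x + m + 1)) with hu_def
  have hu : 0 < u := by positivity
  have h2 : Real.log (1 + x / m) - Real.log (1 + x / (m + 1)) = Real.log (1 + u) := by
    rw [← Real.log_div (by positivity) (by positivity)]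
    congr 1
    rw [hu_def]
    field_simp
    ring
  have h3 : Real.log (1 + u) ≤ u := logle (by positivity)
  have h4 : m * u = x / (x + m + 1) := by
    rw [hu_def]; field_simp
  have h5 : m * Real.log (1 + u) ≤ m * u := by
    exact mul_le_mul_of_nonneg_left h3 (by linarith)
  have h6 : x / (x + 1 + m) = x / (x + m + 1) := by ring_nf
  have h7 : m * Real.log (1 + x / m) - m * Real.log (1 + x / (m + 1)) ≤ x / (x + m + 1) := by
    calc m * Real.log (1 + x / m) - m * Real.log (1 + x / (m + 1))
        = m * (Real.log (1 + x / m) - Real.log (1 + x / (m + 1))) := by ring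
      _ = m * Real.log (1 + u) := by rw [h2]
      _ ≤ m * u := h5
      _ = x / (x + m + 1) := h4
  linarith [h1, h6, h7]

lemma lemB {x : ℝ} (hx : 0 < x) (N : ℕ) :
    ∑ j ∈ Finset.range (N + 1),
        (Real.log (x + 1 + j) - Real.log (1 + j) - x / (x + 1 + j)) ≤
      ((N : ℝ) + 1) * Real.log (1 + x / ((N : ℝ) + 1)) - x / (x + 1) := by
  induction N with
  | zero =>
      simp only [Finset.sum_range_one, Nat.cast_zero, add_zero, Real.log_one, zero_add]
      have : Real.log (x + 1) = Real.log (1 + x / 1) := by norm_num [add_comm]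
      rw [this]; norm_num
  | succ n ih =>
      rw [Finset.sum_range_succ]
      have hA := lemA (x := x) (m := (n : ℝ) + 1) hx (by linarith [Nat.cast_nonneg (α := ℝ) n])
      push_cast
      push_cast at ih hA
      linarith

lemma lemB' {x : ℝ} (hx : 0 < x) (N : ℕ) :
    ∑ j ∈ Finset.range (N + 1),
        (Real.log (x + 1 + j) - Real.log (1 + j) - x / (x + 1 + j)) ≤
      x - x / (x + 1) := by
  have h1 := lemB hx N
  have h2 : ((N : ℝ) + 1) * Real.log (1 + x / ((N : ℝ) + 1)) ≤ x := by
    have hu : 0 < x / ((N : ℝ) + 1) := by positivity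
    have := logle (u := x / ((N : ℝ) + 1)) (by positivity)
    have h3 : ((N : ℝ) + 1) * Real.log (1 + x / ((N : ℝ) + 1)) ≤ ((N : ℝ) + 1) * (x / ((N : ℝ) + 1)) :=
      mul_le_mul_of_nonneg_left this (by positivity)
    have h4 : ((N : ℝ) + 1) * (x / ((N : ℝ) + 1)) = x := by field_simp
    linarith
  linarith
open Real Filter Finset Topology

noncomputable def fF (x : ℝ) : ℝ := Real.log (Real.Gamma (x + 1)) / x - Real.log (x + 1)

noncomputable def gN (N : ℕ) (x : ℝ) : ℝ :=
  ((x + 1) * Real.log N + Real.log (Nat.factorial N)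
      - ∑ j ∈ Finset.range (N + 1), Real.log (x + 1 + j)) / x - Real.log (x + 1)

lemma gN_eq (N : ℕ) (hN : 1 ≤ N) {x : ℝ} (hx : 0 < x) :
    gN N x = Real.log (Real.GammaSeq (x + 1) N) / x - Real.log (x + 1) := by
  have hN0 : (0 : ℝ) < N := by exact_mod_cast hN
  have hfac : (0 : ℝ) < (Nat.factorial N : ℝ) := by exact_mod_cast N.factorial_pos
  have hprod : ∀ j ∈ Finset.range (N + 1), (x + 1 + (j : ℝ)) ≠ 0 := by
    intro j _; positivity
  have hP : (0 : ℝ) < ∏ j ∈ Finset.range (N + 1), (x + 1 + (j : ℝ)) := by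
    apply Finset.prod_pos; intro j _; positivity
  rw [Real.GammaSeq]
  rw [Real.log_div (by positivity) hP.ne', Real.log_mul (by positivity) hfac.ne',
    Real.log_rpow hN0, Real.log_prod hprod]
  rw [gN]

lemma gN_tendsto {x : ℝ} (hx : 0 < x) :
    Tendsto (fun N => gN N x) atTop (𝓝 (fF x)) := by
  have hG : 0 < Real.Gamma (x + 1) := Real.Gamma_pos_of_pos (by linarith)
  have h1 : Tendsto (fun N => Real.log (Real.GammaSeq (x + 1) N) / x - Real.log (x + 1))
      atTop (𝓝 (fF x)) := by
    exact (((Real.GammaSeq_tendsto_Gamma (x + 1)).log hG.ne').div_const x).sub_const _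
  apply h1.congr'
  filter_upwards [eventually_ge_atTop 1] with N hN
  exact (gN_eq N hN hx).symm

lemma gN_hasDeriv (N : ℕ) {x : ℝ} (hx : 0 < x) :
    HasDerivAt (gN N)
      (((Real.log N - ∑ j ∈ Finset.range (N + 1), 1 / (x + 1 + j)) * x -
          ((x + 1) * Real.log N + Real.log (Nat.factorial N)
            - ∑ j ∈ Finset.range (N + 1), Real.log (x + 1 + j)) * 1) / x ^ 2
        - 1 / (x + 1)) x := by
  have hsum : HasDerivAt (fun y => ∑ j ∈ Finset.range (N + 1), Real.log (y + 1 + j))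
      (∑ j ∈ Finset.range (N + 1), 1 / (x + 1 + j)) x := by
    apply HasDerivAt.fun_sum
    intro j _
    have h0 : x + 1 + (j : ℝ) ≠ 0 := by positivity
    have h := (((hasDerivAt_id x).add_const (1 : ℝ)).add_const (j : ℝ)).log h0
    simpa using h
  have hnum : HasDerivAt (fun y => (y + 1) * Real.log N + Real.log (Nat.factorial N)
      - ∑ j ∈ Finset.range (N + 1), Real.log (y + 1 + j))
      (Real.log N - ∑ j ∈ Finset.range (N + 1), 1 / (x + 1 + j)) x := by
    have h1 : HasDerivAt (fun y : ℝ => (y + 1) * Real.log N) (Real.log N) x := by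
      simpa using ((hasDerivAt_id x).add_const (1 : ℝ)).mul_const (Real.log N)
    exact ((h1.add_const _).sub hsum)
  have hdiv := hnum.div (hasDerivAt_id x) hx.ne'
  have hlog : HasDerivAt (fun y : ℝ => Real.log (y + 1)) (1 / (x + 1)) x := by
    have h0 : x + 1 ≠ 0 := by positivity
    simpa using ((hasDerivAt_id x).add_const (1 : ℝ)).log h0
  exact hdiv.sub hlog

lemma aux_div (a x : ℝ) (hx : x ≠ 0) (hx1 : x + 1 ≠ 0) :
    a / x ^ 2 - 1 / (x + 1) = (a - x ^ 2 / (x + 1)) / x ^ 2 := by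
  field_simp

lemma log_sum_fact (N : ℕ) :
    ∑ j ∈ Finset.range (N + 1), Real.log (1 + (j : ℝ)) =
      Real.log ((Nat.factorial (N + 1) : ℕ) : ℝ) := by
  rw [← Real.log_prod (fun j _ => by positivity)]
  congr 1
  calc ∏ j ∈ Finset.range (N + 1), (1 + (j : ℝ))
      = ∏ j ∈ Finset.range (N + 1), (((j + 1 : ℕ) : ℝ)) := by
        apply Finset.prod_congr rfl; intro j _; push_cast; ring
    _ = ((Nat.factorial (N + 1) : ℕ) : ℝ) := by
        rw [← Nat.cast_prod, Finset.prod_range_add_one_eq_factorial]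

lemma deriv_bound (N : ℕ) (hN : 1 ≤ N) {x : ℝ} (hx : 0 < x) :
    ((Real.log N - ∑ j ∈ Finset.range (N + 1), 1 / (x + 1 + j)) * x -
        ((x + 1) * Real.log N + Real.log (Nat.factorial N)
          - ∑ j ∈ Finset.range (N + 1), Real.log (x + 1 + j)) * 1) / x ^ 2
      - 1 / (x + 1) ≤ Real.log (1 + (N : ℝ)⁻¹) / x ^ 2 := by
  have hN0 : (0 : ℝ) < N := by exact_mod_cast hN
  have hfac : (0 : ℝ) < (Nat.factorial N : ℝ) := by exact_mod_cast N.factorial_pos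
  set S1 := ∑ j ∈ Finset.range (N + 1), Real.log (x + 1 + j) with hS1
  set S2 := ∑ j ∈ Finset.range (N + 1), (1 : ℝ) / (x + 1 + j) with hS2
  have hxS2 : x * S2 = ∑ j ∈ Finset.range (N + 1), x / (x + 1 + j) := by
    rw [hS2, Finset.mul_sum]
    apply Finset.sum_congr rfl; intro j _; rw [mul_one_div]
  have hsplit : ∑ j ∈ Finset.range (N + 1),
      (Real.log (x + 1 + j) - Real.log (1 + j) - x / (x + 1 + j)) =
      S1 - (∑ j ∈ Finset.range (N + 1), Real.log (1 + (j : ℝ)))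
        - ∑ j ∈ Finset.range (N + 1), x / (x + 1 + j) := by
    rw [hS1, ← Finset.sum_sub_distrib, ← Finset.sum_sub_distrib]
  have hB := lemB' hx N
  have hfact1 : Real.log ((Nat.factorial (N + 1) : ℕ) : ℝ) =
      Real.log ((N : ℝ) + 1) + Real.log (Nat.factorial N : ℝ) := by
    have : ((Nat.factorial (N + 1) : ℕ) : ℝ) = ((N : ℝ) + 1) * (Nat.factorial N : ℝ) := by
      rw [Nat.factorial_succ]; push_cast; ring
    rw [this, Real.log_mul (by positivity) hfac.ne']
  have hlogq : Real.log (1 + (N : ℝ)⁻¹) = Real.log ((N : ℝ) + 1) - Real.log (N : ℝ) := by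
    rw [← Real.log_div (by positivity) hN0.ne']
    congr 1
    field_simp
  have key : (Real.log N - S2) * x -
      ((x + 1) * Real.log N + Real.log (Nat.factorial N) - S1) * 1 - x ^ 2 / (x + 1) ≤
      Real.log (1 + (N : ℝ)⁻¹) := by
    have h0 : x / (x + 1) + x ^ 2 / (x + 1) = x := by field_simp; ring
    have hLS := log_sum_fact N
    have hexp : S1 - x * S2 ≤ Real.log ((Nat.factorial (N + 1) : ℕ) : ℝ) + x - x / (x + 1) := by
      rw [hxS2]
      have := hsplit
      rw [hLS] at this
      linarith
    nlinarith [hexp, hfact1, hlogq]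
  have hx2 : (0 : ℝ) < x ^ 2 := by positivity
  rw [aux_div _ x hx.ne' (by positivity)]
  exact div_le_div_of_nonneg_right key hx2.le

lemma gN_mono (N : ℕ) (hN : 1 ≤ N) {s t : ℝ} (hs : 0 < s) (hst : s ≤ t) :
    gN N t ≤ gN N s + Real.log (1 + (N : ℝ)⁻¹) / s ^ 2 * (t - s) := by
  set c := Real.log (1 + (N : ℝ)⁻¹) / s ^ 2 with hc
  have hL0 : 0 ≤ Real.log (1 + (N : ℝ)⁻¹) := Real.log_nonneg (by
    have : (0:ℝ) ≤ (N : ℝ)⁻¹ := by positivity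
    linarith)
  have hderiv : ∀ y : ℝ, 0 < y → HasDerivAt (fun z => gN N z - c * z)
      ((((Real.log N - ∑ j ∈ Finset.range (N + 1), 1 / (y + 1 + j)) * y -
          ((y + 1) * Real.log N + Real.log (Nat.factorial N)
            - ∑ j ∈ Finset.range (N + 1), Real.log (y + 1 + j)) * 1) / y ^ 2
        - 1 / (y + 1)) - c * 1) y := by
    intro y hy
    exact (gN_hasDeriv N hy).sub ((hasDerivAt_id y).const_mul c)
  have hanti : AntitoneOn (fun z => gN N z - c * z) (Set.Icc s t) := by
    apply antitoneOn_of_deriv_nonpos (convex_Icc s t)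
    · intro y hy
      have hy0 : 0 < y := lt_of_lt_of_le hs hy.1
      exact (hderiv y hy0).continuousAt.continuousWithinAt
    · intro y hy
      rw [interior_Icc] at hy
      have hy0 : 0 < y := lt_trans hs hy.1
      exact (hderiv y hy0).differentiableAt.differentiableWithinAt
    · intro y hy
      rw [interior_Icc] at hy
      have hy0 : 0 < y := lt_trans hs hy.1
      rw [(hderiv y hy0).deriv]
      have hb := deriv_bound N hN hy0
      have h2 : Real.log (1 + (N : ℝ)⁻¹) / y ^ 2 ≤ c := by
        rw [hc]
        apply div_le_div_of_nonneg_left hL0 (by positivity)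
        have := hy.1
        nlinarith
      linarith
  have h3 := hanti (Set.left_mem_Icc.2 hst) (Set.right_mem_Icc.2 hst) hst
  have h4 : c * (t - s) = c * t - c * s := by ring
  simp only at h3
  linarith

lemma fF_mono {s t : ℝ} (hs : 0 < s) (hst : s ≤ t) : fF t ≤ fF s := by
  have ht0 : 0 < t := lt_of_lt_of_le hs hst
  have h1 : Tendsto (fun N => gN N t) atTop (𝓝 (fF t)) := gN_tendsto ht0
  have hc : Tendsto (fun N : ℕ => Real.log (1 + (N : ℝ)⁻¹)) atTop (𝓝 0) := by
    have h0 : Tendsto (fun N : ℕ => 1 + (N : ℝ)⁻¹) atTop (𝓝 1) := by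
      have := tendsto_one_div_atTop_nhds_zero_nat (𝕜 := ℝ)
      simp only [one_div] at this
      simpa using tendsto_const_nhds.add this
    have := h0.log one_ne_zero
    simpa using this
  have h2 : Tendsto (fun N : ℕ => gN N s + Real.log (1 + (N : ℝ)⁻¹) / s ^ 2 * (t - s))
      atTop (𝓝 (fF s + 0 / s ^ 2 * (t - s))) :=
    (gN_tendsto hs).add ((hc.div_const _).mul_const _)
  rw [show fF s + 0 / s ^ 2 * (t - s) = fF s by ring] at h2
  apply le_of_tendsto_of_tendsto h1 h2
  filter_upwards [eventually_ge_atTop 1] with N hN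
  exact gN_mono N hN hs hst

/-- The constant `p_K = (2π/(K+2)) · (2π^{K/2}/(K·Γ(K/2)))^{−2/K}`. -/
noncomputable def pConst (K : ℕ) : ℝ :=
  (2 * Real.pi / ((K : ℝ) + 2)) *
    (2 * Real.pi ^ ((K : ℝ) / 2) / ((K : ℝ) * Real.Gamma ((K : ℝ) / 2))) ^ (-(2 : ℝ) / (K : ℝ))

lemma pConst_eq (K : ℕ) (hK : 1 ≤ K) : pConst K = Real.exp (fF ((K : ℝ) / 2)) := by
  have hK0 : (0 : ℝ) < K := by exact_mod_cast hK
  have hx : (0 : ℝ) < (K : ℝ) / 2 := by positivity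
  have hG : 0 < Real.Gamma ((K : ℝ) / 2 + 1) := Real.Gamma_pos_of_pos (by linarith)
  have hGam : (K : ℝ) * Real.Gamma ((K : ℝ) / 2) = 2 * Real.Gamma ((K : ℝ) / 2 + 1) := by
    rw [Real.Gamma_add_one hx.ne']
    ring
  have h1 : 2 * Real.pi ^ ((K : ℝ) / 2) / ((K : ℝ) * Real.Gamma ((K : ℝ) / 2)) =
      Real.pi ^ ((K : ℝ) / 2) / Real.Gamma ((K : ℝ) / 2 + 1) := by
    rw [hGam, mul_div_mul_left _ _ (two_ne_zero)]
  have hxK : (K : ℝ) / 2 * ((2 : ℝ) / (K : ℝ)) = 1 := by field_simp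
  have h2 : (Real.pi ^ ((K : ℝ) / 2) / Real.Gamma ((K : ℝ) / 2 + 1)) ^ (-(2 : ℝ) / (K : ℝ)) =
      Real.Gamma ((K : ℝ) / 2 + 1) ^ ((2 : ℝ) / (K : ℝ)) / Real.pi := by
    have e1 : -(2 : ℝ) / (K : ℝ) = -((2 : ℝ) / (K : ℝ)) := by ring
    rw [e1, Real.rpow_neg (by positivity),
      Real.div_rpow (by positivity) hG.le,
      ← Real.rpow_mul Real.pi_pos.le, hxK, Real.rpow_one, inv_div]
  have hA : Real.exp (Real.log (Real.Gamma ((K : ℝ) / 2 + 1)) / ((K : ℝ) / 2)) =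
      Real.Gamma ((K : ℝ) / 2 + 1) ^ ((2 : ℝ) / (K : ℝ)) := by
    rw [Real.rpow_def_of_pos hG]
    congr 1
    field_simp
  have h3 : Real.exp (fF ((K : ℝ) / 2)) =
      Real.Gamma ((K : ℝ) / 2 + 1) ^ ((2 : ℝ) / (K : ℝ)) * ((K : ℝ) / 2 + 1)⁻¹ := by
    rw [fF, Real.exp_sub, hA, Real.exp_log (by linarith), div_eq_mul_inv]
  rw [pConst, h1, h2, h3]
  have hpi := Real.pi_ne_zero
  have hK2 : (K : ℝ) + 2 ≠ 0 := by positivity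
  field_simp

/-- `p_K` is decreasing in `K`: `p_{K+1} ≤ p_K` for all `K ≥ 1`. -/
theorem stmt3 (K : ℕ) (hK : 1 ≤ K) : pConst (K + 1) ≤ pConst K := by
  rw [pConst_eq K hK, pConst_eq (K + 1) (le_trans hK (Nat.le_succ K))]
  apply Real.exp_le_exp.mpr
  apply fF_mono (by positivity)
  push_cast
  linarith
end

section
/- Let R_1²,...,R_K² be positive reals summing to R² and let K_1,...,K_L be positive integers summing to K, partitioning the index set {1,...,K} into tiers [1],...,[L] with R_{[l]}² = ∑_{k∈[l]} R_k². Let p_K = (2π/(K+2))·(2π^{K/2}/(K Γ(K/2)))^{−2/K}. Then for any α_{[1]},...,α_{[L]} ∈ (0,1] with ∏_{l=1}^L α_{[l]} = α: ∑_{l=1}^L R_{[l]}² p_{K_l} α_{[l]}^{2/K_l} ≥ K (∏_{k=1}^K R_k²)^{1/K} p_K α^{2/K}. -/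
open Finset

namespace Stmt12Aux

open Real

lemma pow_base_mono {m n : ℕ} (hm : 0 < m) (hmn : m ≤ n) :
    ((m : ℝ) + 2) ^ m * (n : ℝ) ^ n ≤ (m : ℝ) ^ m * ((n : ℝ) + 2) ^ n := by
  have hn : 0 < n := hm.trans_le hmn
  have hm' : (0:ℝ) < m := by exact_mod_cast hm
  have hn' : (0:ℝ) < n := by exact_mod_cast hn
  have hber : ((1:ℝ) + 2 / (m:ℝ)) ^ ((m:ℝ) / (n:ℝ)) ≤ 1 + 2 / (n:ℝ) := by
    have h := rpow_one_add_le_one_add_mul_self (s := 2 / (m:ℝ))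
      (le_trans (by norm_num) (by positivity : (0:ℝ) ≤ 2 / (m:ℝ)))
      (p := (m:ℝ) / (n:ℝ)) (by positivity)
      (by rw [div_le_one hn']; exact_mod_cast hmn)
    calc ((1:ℝ) + 2 / (m:ℝ)) ^ ((m:ℝ) / (n:ℝ)) ≤ 1 + (m:ℝ) / (n:ℝ) * (2 / (m:ℝ)) := h
      _ = 1 + 2 / (n:ℝ) := by field_simp
  have hb : (0:ℝ) ≤ 1 + 2 / (m:ℝ) := by positivity
  have h2 : ((1:ℝ) + 2 / (m:ℝ)) ^ (m:ℕ) ≤ ((1:ℝ) + 2 / (n:ℝ)) ^ (n:ℕ) := by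
    have h3 := pow_le_pow_left₀ (Real.rpow_nonneg hb _) hber n
    rwa [← Real.rpow_natCast (((1:ℝ) + 2 / (m:ℝ)) ^ ((m:ℝ) / (n:ℝ))) n,
      ← Real.rpow_mul hb, div_mul_cancel₀ _ (ne_of_gt hn'),
      Real.rpow_natCast] at h3
  have e1 : (1:ℝ) + 2 / (m:ℝ) = ((m:ℝ) + 2) / (m:ℝ) := by field_simp
  have e2 : (1:ℝ) + 2 / (n:ℝ) = ((n:ℝ) + 2) / (n:ℝ) := by field_simp
  rw [e1, e2, div_pow, div_pow, div_le_div_iff₀ (by positivity) (by positivity)] at h2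
  calc ((m:ℝ) + 2) ^ m * (n:ℝ) ^ n ≤ ((n:ℝ) + 2) ^ n * (m:ℝ) ^ m := h2
    _ = (m:ℝ) ^ m * ((n:ℝ) + 2) ^ n := by ring

/-- `g m = Γ(m/2 + 1)`. -/
noncomputable def g (m : ℕ) : ℝ := Real.Gamma ((m:ℝ) / 2 + 1)

lemma g_pos (m : ℕ) : 0 < g m := Real.Gamma_pos_of_pos (by positivity)

lemma g_add_two (m : ℕ) : g (m + 2) = ((m:ℝ) / 2 + 1) * g m := by
  unfold g
  have : ((m:ℕ) + 2 : ℕ) = (m + 2 : ℕ) := rfl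
  push_cast
  rw [show ((m:ℝ) + 2) / 2 + 1 = ((m:ℝ) / 2 + 1) + 1 by ring,
    Real.Gamma_add_one (by positivity)]

lemma g_one : g 1 = Real.sqrt π / 2 := by
  unfold g
  push_cast
  rw [show (1:ℝ) / 2 + 1 = 1/2 + 1 by norm_num,
    Real.Gamma_add_one (by norm_num), Real.Gamma_one_half_eq]
  ring

lemma g_two : g 2 = 1 := by
  unfold g; norm_num

lemma g_one_sq : g 1 ^ 2 = π / 4 := by
  rw [g_one, div_pow, Real.sq_sqrt Real.pi_pos.le]; norm_num

/-- The core Gamma inequality. -/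
def Key (a b : ℕ) : Prop :=
  g (a + b) ^ 2 * ((a:ℝ) + 2) ^ a * ((b:ℝ) + 2) ^ b ≤
    g a ^ 2 * g b ^ 2 * ((a:ℝ) + (b:ℝ) + 2) ^ (a + b)


lemma key_symm (a b : ℕ) (h : Key a b) : Key b a := by
  unfold Key at h ⊢
  rw [Nat.add_comm b a]
  calc g (a + b) ^ 2 * ((b:ℝ) + 2) ^ b * ((a:ℝ) + 2) ^ a
      = g (a + b) ^ 2 * ((a:ℝ) + 2) ^ a * ((b:ℝ) + 2) ^ b := by ring
    _ ≤ g a ^ 2 * g b ^ 2 * ((a:ℝ) + (b:ℝ) + 2) ^ (a + b) := h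
    _ = g b ^ 2 * g a ^ 2 * ((b:ℝ) + (a:ℝ) + 2) ^ (a + b) := by ring_nf

lemma key_step (a b : ℕ) (ha : 1 ≤ a) (hb : 1 ≤ b) (h : Key a b) : Key (a + 2) b := by
  unfold Key at h ⊢
  rw [show a + 2 + b = (a + b) + 2 by omega, g_add_two, g_add_two]
  have hmono := pow_base_mono (m := a + 2) (n := (a + b) + 2) (by omega) (by omega)
  push_cast at hmono ⊢
  have hF : (0:ℝ) < ((a:ℝ) + 2) ^ a * ((a:ℝ) + (b:ℝ) + 2) ^ (a + b) * 4 := by positivity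
  apply le_of_mul_le_mul_right _ hF
  have hgK := g_pos (a + b)
  have hga := g_pos a
  have hgb := g_pos b
  calc ((((a:ℝ) + (b:ℝ)) / 2 + 1) * g (a + b)) ^ 2 * ((a:ℝ) + 2 + 2) ^ (a + 2) *
        ((b:ℝ) + 2) ^ b * (((a:ℝ) + 2) ^ a * ((a:ℝ) + (b:ℝ) + 2) ^ (a + b) * 4)
      = (g (a + b) ^ 2 * ((a:ℝ) + 2) ^ a * ((b:ℝ) + 2) ^ b) *
        (((a:ℝ) + 2 + 2) ^ (a + 2) * ((a:ℝ) + (b:ℝ) + 2) ^ (a + b + 2)) := by ring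
    _ ≤ (g a ^ 2 * g b ^ 2 * ((a:ℝ) + (b:ℝ) + 2) ^ (a + b)) *
        (((a:ℝ) + 2) ^ (a + 2) * ((a:ℝ) + (b:ℝ) + 2 + 2) ^ (a + b + 2)) := by
        exact mul_le_mul h hmono (by positivity) (by positivity)
    _ = (((a:ℝ) / 2 + 1) * g a) ^ 2 * g b ^ 2 * ((a:ℝ) + 2 + (b:ℝ) + 2) ^ (a + b + 2) *
        (((a:ℝ) + 2) ^ a * ((a:ℝ) + (b:ℝ) + 2) ^ (a + b) * 4) := by ring

lemma key_one_one : Key 1 1 := by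
  unfold Key
  have h2 : g (1 + 1) = 1 := g_two
  rw [h2, g_one_sq]
  push_cast
  norm_num
  nlinarith [Real.pi_gt_three]

lemma key_one_two : Key 1 2 := by
  unfold Key
  have h3 : g (1 + 2) = (3:ℝ) / 2 * (Real.sqrt π / 2) := by
    rw [show (1 + 2 : ℕ) = 1 + 2 from rfl, g_add_two, g_one]; norm_num
  rw [h3, g_one_sq, g_two]
  have hsq : Real.sqrt π ^ 2 = π := Real.sq_sqrt Real.pi_pos.le
  push_cast
  norm_num
  nlinarith [Real.pi_pos, hsq]

lemma key_two_two : Key 2 2 := by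
  unfold Key
  have h4 : g (2 + 2) = 2 := by rw [g_add_two, g_two]; norm_num
  rw [h4, g_two]
  norm_num

lemma key_all : ∀ (n a b : ℕ), a + b = n → 1 ≤ a → 1 ≤ b → Key a b := by
  intro n
  induction n using Nat.strong_induction_on with
  | _ n ih =>
    intro a b hab ha hb
    by_cases h3 : 3 ≤ a
    · obtain ⟨a', rfl⟩ : ∃ a', a = a' + 2 := ⟨a - 2, by omega⟩
      exact key_step a' b (by omega) hb (ih (a' + b) (by omega) a' b rfl (by omega) hb)
    · by_cases h3b : 3 ≤ b
      · obtain ⟨b', rfl⟩ : ∃ b', b = b' + 2 := ⟨b - 2, by omega⟩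
        exact key_symm _ _ (key_step b' a (by omega) ha
          (key_symm _ _ (ih (a + b') (by omega) a b' rfl ha (by omega))))
      · interval_cases a <;> interval_cases b
        · exact key_one_one
        · exact key_one_two
        · exact key_symm _ _ key_one_two
        · exact key_two_two

lemma pConst_eq (m : ℕ) (hm : 0 < m) :
    pConst m = 2 / ((m:ℝ) + 2) * g m ^ ((2:ℝ) / (m:ℝ)) := by
  have hm' : (0:ℝ) < m := by exact_mod_cast hm
  have hg : 0 < Real.Gamma ((m:ℝ) / 2 + 1) := Real.Gamma_pos_of_pos (by positivity)
  unfold pConst g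
  have h1 : (m:ℝ) * Real.Gamma ((m:ℝ) / 2) = 2 * Real.Gamma ((m:ℝ) / 2 + 1) := by
    rw [Real.Gamma_add_one (by positivity)]; ring
  rw [h1]
  have h2 : 2 * π ^ ((m:ℝ) / 2) / (2 * Real.Gamma ((m:ℝ) / 2 + 1)) =
      π ^ ((m:ℝ) / 2) / Real.Gamma ((m:ℝ) / 2 + 1) := by
    rw [mul_div_mul_left _ _ two_ne_zero]
  have hπ : (0:ℝ) < π ^ ((m:ℝ) / 2) := Real.rpow_pos_of_pos Real.pi_pos _
  rw [h2, Real.div_rpow hπ.le hg.le, ← Real.rpow_mul Real.pi_pos.le,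
    show ((m:ℝ) / 2) * (-(2:ℝ) / (m:ℝ)) = -1 by field_simp,
    Real.rpow_neg_one,
    show (-(2:ℝ)) / (m:ℝ) = -((2:ℝ) / (m:ℝ)) by ring,
    Real.rpow_neg hg.le]
  have hgr : (0:ℝ) < Real.Gamma ((m:ℝ) / 2 + 1) ^ ((2:ℝ) / (m:ℝ)) :=
    Real.rpow_pos_of_pos hg _
  field_simp

lemma pConst_pos (m : ℕ) (hm : 0 < m) : 0 < pConst m := by
  rw [pConst_eq m hm]
  have hm' : (0:ℝ) < m := by exact_mod_cast hm
  exact mul_pos (by positivity) (Real.rpow_pos_of_pos (g_pos m) _)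

lemma pConst_pow (m : ℕ) (hm : 0 < m) :
    pConst m ^ m = (2 / ((m:ℝ) + 2)) ^ m * g m ^ 2 := by
  have hm' : (0:ℝ) < m := by exact_mod_cast hm
  rw [pConst_eq m hm, mul_pow, ← Real.rpow_natCast (g m ^ ((2:ℝ) / (m:ℝ))) m,
    ← Real.rpow_mul (g_pos m).le, div_mul_cancel₀ _ (ne_of_gt hm'),
    show (2:ℝ) = ((2:ℕ):ℝ) by norm_num, Real.rpow_natCast]

lemma pTwo (a b : ℕ) (ha : 0 < a) (hb : 0 < b) :
    pConst (a + b) ^ (a + b) ≤ pConst a ^ a * pConst b ^ b := by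
  rw [pConst_pow a ha, pConst_pow b hb, pConst_pow (a + b) (by omega)]
  have hkey := key_all (a + b) a b rfl ha hb
  unfold Key at hkey
  have hga := g_pos a
  have hgb := g_pos b
  have hgK := g_pos (a + b)
  have ha' : (0:ℝ) < a := by exact_mod_cast ha
  have hb' : (0:ℝ) < b := by exact_mod_cast hb
  push_cast
  rw [div_pow, div_pow, div_pow]
  rw [show (2:ℝ) ^ (a + b) / ((a:ℝ) + (b:ℝ) + 2) ^ (a + b) * g (a + b) ^ 2
      = (2 ^ (a + b) * g (a + b) ^ 2) / (((a:ℝ) + (b:ℝ) + 2) ^ (a + b)) by ring,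
    show (2:ℝ) ^ a / ((a:ℝ) + 2) ^ a * g a ^ 2 * ((2:ℝ) ^ b / ((b:ℝ) + 2) ^ b * g b ^ 2)
      = (2 ^ a * g a ^ 2 * (2 ^ b * g b ^ 2)) / (((a:ℝ) + 2) ^ a * ((b:ℝ) + 2) ^ b) by ring,
    div_le_div_iff₀ (by positivity) (by positivity)]
  calc 2 ^ (a + b) * g (a + b) ^ 2 * (((a:ℝ) + 2) ^ a * ((b:ℝ) + 2) ^ b)
      = 2 ^ (a + b) * (g (a + b) ^ 2 * ((a:ℝ) + 2) ^ a * ((b:ℝ) + 2) ^ b) := by ring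
    _ ≤ 2 ^ (a + b) * (g a ^ 2 * g b ^ 2 * ((a:ℝ) + (b:ℝ) + 2) ^ (a + b)) := by
        exact mul_le_mul_of_nonneg_left hkey (by positivity)
    _ = 2 ^ a * g a ^ 2 * (2 ^ b * g b ^ 2) * (((a:ℝ) + (b:ℝ) + 2) ^ (a + b)) := by ring

lemma superadd {ι : Type*} (s : Finset ι) (m : ι → ℕ) (hm : ∀ i ∈ s, 0 < m i) :
    pConst (∑ i ∈ s, m i) ^ (∑ i ∈ s, m i) ≤ ∏ i ∈ s, pConst (m i) ^ (m i) := by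
  classical
  induction s using Finset.cons_induction with
  | empty => simp
  | cons a s ha ih =>
    rw [Finset.sum_cons, Finset.prod_cons]
    rcases s.eq_empty_or_nonempty with rfl | hne
    · simp
    · have hS : 0 < ∑ i ∈ s, m i := by
        obtain ⟨j, hj⟩ := hne
        exact Finset.sum_pos' (fun i _ => Nat.zero_le _)
          ⟨j, hj, hm j (Finset.mem_cons_of_mem hj)⟩
      calc pConst (m a + ∑ i ∈ s, m i) ^ (m a + ∑ i ∈ s, m i)
          ≤ pConst (m a) ^ (m a) * pConst (∑ i ∈ s, m i) ^ (∑ i ∈ s, m i) :=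
            pTwo _ _ (hm a (Finset.mem_cons_self a s)) hS
        _ ≤ pConst (m a) ^ (m a) * ∏ i ∈ s, pConst (m i) ^ (m i) := by
            exact mul_le_mul_of_nonneg_left
              (ih fun i hi => hm i (Finset.mem_cons_of_mem hi))
              (pow_nonneg (pConst_pos _ (hm a (Finset.mem_cons_self a s))).le _)

lemma main_aux (L K : ℕ) (hK : 0 < K) (n : Fin L → ℕ) (hn : ∀ l, 0 < n l)
    (hsum : ∑ l, n l = K) (S G : Fin L → ℝ) (hS : ∀ l, 0 < S l) (hG : ∀ l, 0 < G l)
    (hGS : ∀ l, G l ≤ (S l / (n l : ℝ)) ^ (n l)) (α : Fin L → ℝ) (hα : ∀ l, 0 < α l) :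
    (K:ℝ) * (∏ l, G l) ^ (1 / (K:ℝ)) * pConst K * (∏ l, α l) ^ (2 / (K:ℝ)) ≤
      ∑ l, S l * pConst (n l) * α l ^ (2 / ((n l : ℕ) : ℝ)) := by
  have hK' : (0:ℝ) < K := by exact_mod_cast hK
  have hn' : ∀ l, (0:ℝ) < n l := fun l => by exact_mod_cast hn l
  have hp : ∀ l, 0 < pConst (n l) := fun l => pConst_pos _ (hn l)
  have hpK : 0 < pConst K := pConst_pos _ hK
  set w : Fin L → ℝ := fun l => (n l : ℝ) / K with hw
  set z : Fin L → ℝ :=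
    fun l => S l / (n l : ℝ) * ((K:ℝ) * (pConst (n l) * α l ^ (2 / ((n l):ℝ)))) with hz
  have hwpos : ∀ l, 0 < w l := fun l => div_pos (hn' l) hK'
  have hw1 : ∑ l, w l = 1 := by
    have hc : (∑ l, ((n l : ℕ):ℝ)) = (K:ℝ) := by exact_mod_cast congrArg (Nat.cast (R := ℝ)) hsum
    simp only [hw]
    rw [← Finset.sum_div, hc, div_self (ne_of_gt hK')]
  have hzpos : ∀ l, 0 < z l := fun l =>
    mul_pos (div_pos (hS l) (hn' l))
      (mul_pos hK' (mul_pos (hp l) (Real.rpow_pos_of_pos (hα l) _)))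
  have hAM := Real.geom_mean_le_arith_mean_weighted Finset.univ w z
    (fun i _ => (hwpos i).le) hw1 (fun i _ => (hzpos i).le)
  have hsum_eq : ∀ l, w l * z l = S l * pConst (n l) * α l ^ (2 / ((n l):ℝ)) := by
    intro l
    simp only [hw, hz]
    rw [show ((n l:ℝ) / (K:ℝ)) * (S l / (n l:ℝ) * ((K:ℝ) * (pConst (n l) * α l ^ (2 / ((n l):ℝ)))))
        = ((n l:ℝ) / (n l:ℝ)) * ((K:ℝ) / (K:ℝ)) * (S l * pConst (n l) * α l ^ (2 / ((n l):ℝ))) by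
          ring,
      div_self (ne_of_gt (hn' l)), div_self (ne_of_gt hK'), one_mul, one_mul]
  have hdecomp : ∀ l, z l ^ w l =
      (S l / (n l:ℝ)) ^ w l * (K:ℝ) ^ w l * pConst (n l) ^ w l * α l ^ ((2:ℝ) / (K:ℝ)) := by
    intro l
    simp only [hz]
    rw [Real.mul_rpow (div_nonneg (hS l).le (hn' l).le)
        (mul_nonneg hK'.le (mul_nonneg (hp l).le (Real.rpow_nonneg (hα l).le _))),
      Real.mul_rpow hK'.le (mul_nonneg (hp l).le (Real.rpow_nonneg (hα l).le _)),
      Real.mul_rpow (hp l).le (Real.rpow_nonneg (hα l).le _),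
      ← Real.rpow_mul (hα l).le,
      show 2 / ((n l):ℝ) * w l = 2 / (K:ℝ) by
        simp only [hw]
        rw [div_mul_div_comm, mul_comm (2:ℝ) ((n l:ℝ)),
          mul_div_mul_left _ _ (ne_of_gt (hn' l))]]
    ring
  have hprod_eq : ∏ l, z l ^ w l =
      (∏ l, (S l / (n l:ℝ)) ^ w l) * (∏ l, (K:ℝ) ^ w l) *
        (∏ l, pConst (n l) ^ w l) * (∏ l, α l ^ ((2:ℝ) / (K:ℝ))) := by
    rw [← Finset.prod_mul_distrib, ← Finset.prod_mul_distrib, ← Finset.prod_mul_distrib]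
    exact Finset.prod_congr rfl fun l _ => hdecomp l
  have B2 : (∏ l, (K:ℝ) ^ w l) = (K:ℝ) := by
    rw [← Real.rpow_sum_of_pos hK' w Finset.univ, hw1, Real.rpow_one]
  have B4 : (∏ l, α l ^ ((2:ℝ) / (K:ℝ))) = (∏ l, α l) ^ ((2:ℝ) / (K:ℝ)) :=
    Real.finset_prod_rpow Finset.univ α (fun i _ => (hα i).le) _
  have B3 : pConst K ≤ ∏ l, pConst (n l) ^ w l := by
    have h := superadd Finset.univ n (fun i _ => hn i)
    rw [hsum] at h
    have h2 := Real.rpow_le_rpow (pow_nonneg hpK.le K) h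
      (by positivity : (0:ℝ) ≤ 1 / (K:ℝ))
    rw [← Real.rpow_natCast (pConst K) K, ← Real.rpow_mul hpK.le,
      mul_one_div, div_self (ne_of_gt hK'), Real.rpow_one,
      ← Real.finset_prod_rpow Finset.univ _ (fun i _ => pow_nonneg (hp i).le _)
        (1 / (K:ℝ))] at h2
    calc pConst K ≤ ∏ l, (pConst (n l) ^ (n l : ℕ)) ^ ((1:ℝ) / (K:ℝ)) := h2
      _ = ∏ l, pConst (n l) ^ w l := by
          apply Finset.prod_congr rfl
          intro l _
          rw [← Real.rpow_natCast (pConst (n l)) (n l), ← Real.rpow_mul (hp l).le,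
            mul_one_div]
  have B1 : (∏ l, G l) ^ ((1:ℝ) / (K:ℝ)) ≤ ∏ l, (S l / (n l:ℝ)) ^ w l := by
    rw [← Real.finset_prod_rpow Finset.univ G (fun i _ => (hG i).le) _]
    apply Finset.prod_le_prod (fun i _ => Real.rpow_nonneg (hG i).le _)
    intro i _
    have h := Real.rpow_le_rpow (hG i).le (hGS i)
      (by positivity : (0:ℝ) ≤ 1 / (K:ℝ))
    rw [← Real.rpow_natCast (S i / (n i:ℝ)) (n i),
      ← Real.rpow_mul (div_nonneg (hS i).le (hn' i).le), mul_one_div] at h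
    simpa only [hw] using h
  have hSn_nonneg : (0:ℝ) ≤ ∏ l, (S l / (n l:ℝ)) ^ w l :=
    Finset.prod_nonneg fun i _ => Real.rpow_nonneg (div_nonneg (hS i).le (hn' i).le) _
  have hmid := mul_le_mul B1 B3 hpK.le hSn_nonneg
  calc (K:ℝ) * (∏ l, G l) ^ (1 / (K:ℝ)) * pConst K * (∏ l, α l) ^ (2 / (K:ℝ))
      = ((∏ l, G l) ^ ((1:ℝ) / (K:ℝ)) * pConst K) *
        ((K:ℝ) * (∏ l, α l) ^ ((2:ℝ) / (K:ℝ))) := by ring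
    _ ≤ ((∏ l, (S l / (n l:ℝ)) ^ w l) * (∏ l, pConst (n l) ^ w l)) *
        ((K:ℝ) * (∏ l, α l) ^ ((2:ℝ) / (K:ℝ))) := by
        exact mul_le_mul_of_nonneg_right hmid
          (mul_nonneg hK'.le (Real.rpow_nonneg
            (Finset.prod_nonneg fun i _ => (hα i).le) _))
    _ = (∏ l, (S l / (n l:ℝ)) ^ w l) * (∏ l, (K:ℝ) ^ w l) *
        (∏ l, pConst (n l) ^ w l) * (∏ l, α l ^ ((2:ℝ) / (K:ℝ))) := by
        rw [B2, B4]; ring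
    _ = ∏ l, z l ^ w l := hprod_eq.symm
    _ ≤ ∑ l, w l * z l := hAM
    _ = ∑ l, S l * pConst (n l) * α l ^ (2 / ((n l):ℝ)) :=
        Finset.sum_congr rfl fun l _ => hsum_eq l

end Stmt12Aux

open Stmt12Aux in
/-- Superiority of the optimal weighted Euclidean distance over tiers of covariates:
with positive `Rsq k` (the squared correlations `R_k²`), a partition of the `K` covariates
into `L` nonempty tiers via the surjective map `t`, per-tier acceptance rates
`α_[l] ∈ (0,1]` with product `α`, one has
`∑_l R_{[l]}² p_{K_l} α_{[l]}^{2/K_l} ≥ K (∏_k R_k²)^{1/K} p_K α^{2/K}`, where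
`K_l` is the size of tier `l` and `R_{[l]}² = ∑_{k∈[l]} R_k²`. -/
theorem stmt12 (K L : ℕ) (hK : 0 < K) (hL : 0 < L) (Rsq : Fin K → ℝ)
    (hR : ∀ k, 0 < Rsq k) (t : Fin K → Fin L) (ht : Function.Surjective t)
    (α : Fin L → ℝ) (hα : ∀ l, α l ∈ Set.Ioc (0 : ℝ) 1) :
    (K : ℝ) * (∏ k, Rsq k) ^ (1 / (K : ℝ)) * pConst K * (∏ l, α l) ^ (2 / (K : ℝ)) ≤
      ∑ l, (∑ k ∈ Finset.univ.filter fun k => t k = l, Rsq k) *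
        pConst ((Finset.univ.filter fun k => t k = l).card) *
        (α l) ^ (2 / (((Finset.univ.filter fun k => t k = l).card : ℕ) : ℝ)) := by
  classical
  have hn : ∀ l, 0 < (Finset.univ.filter fun k => t k = l).card := by
    intro l
    obtain ⟨k, hk⟩ := ht l
    exact Finset.card_pos.mpr ⟨k, by simp [hk]⟩
  have hsum : ∑ l, (Finset.univ.filter fun k => t k = l).card = K := by
    have h := Finset.card_eq_sum_card_fiberwise
      (f := t) (s := (Finset.univ : Finset (Fin K))) (t := (Finset.univ : Finset (Fin L)))
      (fun x _ => Finset.mem_univ _)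
    simpa using h.symm
  have hS : ∀ l, 0 < ∑ k ∈ Finset.univ.filter (fun k => t k = l), Rsq k := fun l =>
    Finset.sum_pos (fun k _ => hR k) (Finset.card_pos.mp (hn l))
  have hG : ∀ l, 0 < ∏ k ∈ Finset.univ.filter (fun k => t k = l), Rsq k := fun l =>
    Finset.prod_pos fun k _ => hR k
  have hGS : ∀ l, (∏ k ∈ Finset.univ.filter (fun k => t k = l), Rsq k) ≤
      ((∑ k ∈ Finset.univ.filter (fun k => t k = l), Rsq k) /
        (((Finset.univ.filter fun k => t k = l).card : ℕ) : ℝ)) ^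
        ((Finset.univ.filter fun k => t k = l).card) := by
    intro l
    set s : Finset (Fin K) := Finset.univ.filter fun k => t k = l with hs
    set m : ℕ := s.card with hm
    have hm0 : 0 < m := hn l
    have hm' : (0:ℝ) < m := by exact_mod_cast hm0
    have hprodnn : (0:ℝ) ≤ ∏ k ∈ s, Rsq k := (hG l).le
    have ham := Real.geom_mean_le_arith_mean_weighted s (fun _ => 1 / (m:ℝ)) Rsq
      (fun i _ => by positivity)
      (by rw [Finset.sum_const, nsmul_eq_mul]; field_simp; rfl)
      (fun i _ => (hR i).le)
    have hL' : ∏ k ∈ s, Rsq k ^ ((1:ℝ) / (m:ℝ)) = (∏ k ∈ s, Rsq k) ^ ((1:ℝ) / (m:ℝ)) :=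
      Real.finset_prod_rpow s Rsq (fun i _ => (hR i).le) _
    have hRr : ∑ k ∈ s, 1 / (m:ℝ) * Rsq k = (∑ k ∈ s, Rsq k) / (m:ℝ) := by
      rw [← Finset.mul_sum]; ring
    rw [hL', hRr] at ham
    have h2 := pow_le_pow_left₀ (Real.rpow_nonneg hprodnn _) ham m
    rwa [← Real.rpow_natCast ((∏ k ∈ s, Rsq k) ^ ((1:ℝ) / (m:ℝ))) m,
      ← Real.rpow_mul hprodnn, one_div_mul_cancel (ne_of_gt hm'),
      Real.rpow_one] at h2
  have hGprod : (∏ l, ∏ k ∈ Finset.univ.filter (fun k => t k = l), Rsq k) = ∏ k, Rsq k :=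
    Finset.prod_fiberwise_of_maps_to (fun k _ => Finset.mem_univ _) Rsq
  rw [← hGprod]
  exact main_aux L K hK (fun l => (Finset.univ.filter fun k => t k = l).card) hn hsum
    (fun l => ∑ k ∈ Finset.univ.filter (fun k => t k = l), Rsq k)
    (fun l => ∏ k ∈ Finset.univ.filter (fun k => t k = l), Rsq k)
    hS hG hGS α (fun l => (hα l).1)
end

section
/- Let μ ∈ R^K with ‖μ‖₂ = 1 and let H ∈ R^{K×K} be an orthogonal projection matrix. Let η ~ N(0, I_K) and a > 0. Then Var(μᵀHη | ‖η‖₂² ≤ a) ≤ Var(μᵀη | ‖η‖₂² ≤ a). -/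
open MeasureTheory ProbabilityTheory Matrix Finset

/-- The law of a standard normal random vector in `ℝ^K`. -/
noncomputable def stdGaussian (K : ℕ) : Measure (Fin K → ℝ) :=
  Measure.pi fun _ => gaussianReal 0 1

/-- For a unit vector `μ`, an orthogonal projection matrix `H`, and `η ~ N(0, I_K)`
conditioned on the ball `‖η‖₂² ≤ a`,
`Var(μᵀHη | ‖η‖² ≤ a) ≤ Var(μᵀη | ‖η‖² ≤ a)`. -/
theorem stmt15 (K : ℕ) (u : Fin K → ℝ) (hu : ∑ k, (u k) ^ 2 = 1)
    (H : Matrix (Fin K) (Fin K) ℝ) (hHsymm : Hᵀ = H) (hHidem : H * H = H)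
    (a : ℝ) (ha : 0 < a) :
    variance (fun x => u ⬝ᵥ H.mulVec x)
        ((stdGaussian K)[|{x : Fin K → ℝ | ∑ k, (x k) ^ 2 ≤ a}]) ≤
      variance (fun x => u ⬝ᵥ x)
        ((stdGaussian K)[|{x : Fin K → ℝ | ∑ k, (x k) ^ 2 ≤ a}]) := by
  classical
  -- K is positive
  have hK : K ≠ 0 := by rintro rfl; simp at hu
  have i0 : Fin K := ⟨0, Nat.pos_of_ne_zero hK⟩
  set ν : Measure (Fin K → ℝ) := stdGaussian K with hν
  haveI : IsProbabilityMeasure ν := by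
    rw [hν]; unfold _root_.stdGaussian; infer_instance
  set S : Set (Fin K → ℝ) := {x : Fin K → ℝ | ∑ k, (x k) ^ 2 ≤ a} with hS
  have hSm : MeasurableSet S := by
    have : Measurable fun x : Fin K → ℝ => ∑ k, (x k) ^ 2 := by
      exact Finset.measurable_sum _ fun k _ => (measurable_pi_apply k).pow_const 2
    exact measurableSet_le this measurable_const
  -- positivity of ν S
  have hSpos : ν S ≠ 0 := by
    have hsub : (Set.univ.pi fun _ : Fin K => {t : ℝ | t ^ 2 ≤ a / K}) ⊆ S := by
      intro x hx
      simp only [Set.mem_pi, Set.mem_univ, forall_true_left, Set.mem_setOf_eq] at hx ⊢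
      calc ∑ k, (x k) ^ 2 ≤ ∑ _k : Fin K, a / K := Finset.sum_le_sum fun k _ => hx k
        _ = a := by
          rw [Finset.sum_const, Finset.card_univ, Fintype.card_fin, nsmul_eq_mul]
          field_simp
    have hone : (gaussianReal 0 1 : Measure ℝ) {t : ℝ | t ^ 2 ≤ a / K} ≠ 0 := by
      intro h0
      have hvol : (volume : Measure ℝ) {t : ℝ | t ^ 2 ≤ a / K} = 0 :=
        gaussianReal_absolutelyContinuous' 0 one_ne_zero h0
      have hIcc : Set.Icc (0:ℝ) (Real.sqrt (a / K)) ⊆ {t : ℝ | t ^ 2 ≤ a / K} := by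
        intro t ht
        have h1 : 0 ≤ a / K := le_of_lt (div_pos ha (by positivity))
        have := Real.sq_sqrt h1
        simp only [Set.mem_setOf_eq]
        nlinarith [ht.1, ht.2]
      have := measure_mono_null hIcc hvol
      rw [Real.volume_Icc] at this
      have hpos : (0:ℝ) < Real.sqrt (a / K) :=
        Real.sqrt_pos.mpr (div_pos ha (by positivity))
      rw [sub_zero, ENNReal.ofReal_eq_zero] at this
      linarith
    intro h0
    have : ν (Set.univ.pi fun _ : Fin K => {t : ℝ | t ^ 2 ≤ a / K}) = 0 :=
      measure_mono_null hsub h0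
    rw [hν] at this
    unfold _root_.stdGaussian at this
    rw [Measure.pi_pi] at this
    rw [Finset.prod_eq_zero_iff] at this
    obtain ⟨i, -, hi⟩ := this
    exact hone hi
  set μc : Measure (Fin K → ℝ) := ν[|S] with hμc
  haveI : IsProbabilityMeasure μc := cond_isProbabilityMeasure hSpos
  -- a.e. membership in S
  have hmemS : ∀ᵐ x ∂μc, x ∈ S := by
    have h1 : ∀ᵐ x ∂(ν.restrict S), x ∈ S := ae_restrict_mem hSm
    have h2 : μc ≪ ν.restrict S := by
      rw [hμc]; exact Measure.smul_absolutelyContinuous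
    exact h2.ae_le h1
  have habs : ∀ x ∈ S, ∀ i : Fin K, |x i| ≤ Real.sqrt a := by
    intro x hx i
    have h1 : (x i) ^ 2 ≤ ∑ k, (x k) ^ 2 :=
      Finset.single_le_sum (fun k _ => sq_nonneg (x k)) (Finset.mem_univ i)
    have h2 : (x i) ^ 2 ≤ a := le_trans h1 hx
    calc |x i| = Real.sqrt ((x i) ^ 2) := (Real.sqrt_sq_eq_abs _).symm
      _ ≤ Real.sqrt a := Real.sqrt_le_sqrt h2
  -- integrability from boundedness on S
  have hint : ∀ (g : (Fin K → ℝ) → ℝ) (C : ℝ), Measurable g → (∀ x ∈ S, ‖g x‖ ≤ C) →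
      Integrable g μc := by
    intro g C hg hC
    exact ⟨hg.aestronglyMeasurable,
      HasFiniteIntegral.of_bounded (hmemS.mono fun x hx => hC x hx)⟩
  have hmeasi : ∀ i : Fin K, Measurable fun x : Fin K → ℝ => x i :=
    fun i => measurable_pi_apply i
  have hint_i : ∀ i : Fin K, Integrable (fun x => x i) μc := by
    intro i
    exact hint _ (Real.sqrt a) (hmeasi i) fun x hx => habs x hx i
  have hint_ij : ∀ i j : Fin K, Integrable (fun x => x i * x j) μc := by
    intro i j
    refine hint _ a ((hmeasi i).mul (hmeasi j)) fun x hx => ?_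
    have h1 := habs x hx i
    have h2 := habs x hx j
    have h3 : Real.sqrt a * Real.sqrt a = a := Real.mul_self_sqrt ha.le
    calc ‖x i * x j‖ = |x i| * |x j| := abs_mul _ _
      _ ≤ Real.sqrt a * Real.sqrt a :=
        mul_le_mul h1 h2 (abs_nonneg _) (Real.sqrt_nonneg a)
      _ = a := h3
  -- generic symmetry lemma
  have key : ∀ (T : (Fin K → ℝ) → (Fin K → ℝ)) (g : (Fin K → ℝ) → ℝ),
      Measurable T → Measure.map T ν = ν →
      (∀ x, (∑ k, (T x k) ^ 2) = ∑ k, (x k) ^ 2) → Measurable g →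
      ∫ x, g x ∂μc = ∫ x, g (T x) ∂μc := by
    intro T g hTm hTν hsum hg
    have hpre : T ⁻¹' S = S := by
      ext x; simp only [Set.mem_preimage, hS, Set.mem_setOf_eq, hsum x]
    have hmap : Measure.map T μc = μc := by
      rw [hμc]
      show Measure.map T ((ν S)⁻¹ • ν.restrict S) = (ν S)⁻¹ • ν.restrict S
      rw [Measure.map_smul]
      congr 1
      calc Measure.map T (ν.restrict S) = Measure.map T (ν.restrict (T ⁻¹' S)) := by
            rw [hpre]
        _ = (Measure.map T ν).restrict S := (Measure.restrict_map hTm hSm).symm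
        _ = ν.restrict S := by rw [hTν]
    conv_lhs => rw [← hmap]
    rw [integral_map hTm.aemeasurable]
    rw [hmap]
    exact hg.aestronglyMeasurable
  -- negation map at coordinate i
  have neg_map : ∀ i : Fin K,
      Measure.map (fun x : Fin K → ℝ => fun k => if k = i then -(x k) else x k) ν = ν := by
    intro i
    have hgr : (gaussianReal 0 1 : Measure ℝ).map (fun t : ℝ => -t) = gaussianReal 0 1 := by
      have := gaussianReal_map_const_mul (μ := 0) (v := 1) (-1 : ℝ)
      simp only [neg_one_mul, mul_zero] at this
      rw [this]
      congr 1
      ext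
      simp
    have hmp : MeasurePreserving
        (fun x : Fin K → ℝ => fun k => (fun k t => if k = i then -t else t) k (x k)) ν ν := by
      rw [hν]; unfold _root_.stdGaussian
      refine measurePreserving_pi (fun _ => gaussianReal 0 1) (fun _ => gaussianReal 0 1)
        (f := fun k t => if k = i then -t else t) fun k => ?_
      by_cases hk : k = i
      · subst hk
        simp only [if_pos rfl]
        exact ⟨measurable_neg, hgr⟩
      · simp only [if_neg hk]
        exact ⟨measurable_id, Measure.map_id'⟩
    exact hmp.map_eq
  -- swap map
  have swap_map : ∀ i : Fin K,
      Measure.map (fun x : Fin K → ℝ => x ∘ Equiv.swap i i0) ν = ν := by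
    intro i
    have hmp := measurePreserving_arrowCongr' (fun _ : Fin K => gaussianReal (0:ℝ) 1)
      (fun _ : Fin K => gaussianReal (0:ℝ) 1) (Equiv.swap i i0) (MeasurableEquiv.refl ℝ)
      (fun _ => MeasurePreserving.id _)
    have heq : ⇑(MeasurableEquiv.arrowCongr' (Equiv.swap i i0) (MeasurableEquiv.refl ℝ))
        = fun x : Fin K → ℝ => x ∘ Equiv.swap i i0 := by
      funext x
      ext k
      simp [MeasurableEquiv.arrowCongr', Equiv.arrowCongr', Equiv.arrowCongr,
        Equiv.symm_swap, MeasurableEquiv.refl, Function.comp]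
    rw [hν]
    show Measure.map _ (stdGaussian K) = stdGaussian K
    unfold _root_.stdGaussian
    rw [← heq]
    exact hmp.map_eq
  have neg_meas : ∀ i : Fin K,
      Measurable (fun x : Fin K → ℝ => fun k => if k = i then -(x k) else x k) := by
    intro i
    refine measurable_pi_lambda _ fun k => ?_
    by_cases hk : k = i
    · simp only [if_pos hk]; exact (measurable_pi_apply k).neg
    · simp only [if_neg hk]; exact measurable_pi_apply k
  have neg_sum : ∀ (i : Fin K) (x : Fin K → ℝ),
      (∑ k, ((fun k => if k = i then -(x k) else x k) k) ^ 2) = ∑ k, (x k) ^ 2 := by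
    intro i x
    refine Finset.sum_congr rfl fun k _ => ?_
    show (if k = i then -(x k) else x k) ^ 2 = x k ^ 2
    split <;> ring
  -- moments
  have mean_zero : ∀ i : Fin K, ∫ x, x i ∂μc = 0 := by
    intro i
    have h := key (fun x : Fin K → ℝ => fun k => if k = i then -(x k) else x k)
      (fun x => x i)
      (neg_meas i) (neg_map i)
      (neg_sum i) (hmeasi i)
    simp only [eq_self_iff_true, if_true] at h
    have : ∫ x, -(x i) ∂μc = -∫ x, x i ∂μc := integral_neg _
    rw [this] at h
    linarith
  have cross_zero : ∀ i j : Fin K, i ≠ j → ∫ x, x i * x j ∂μc = 0 := by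
    intro i j hij
    have h := key (fun x : Fin K → ℝ => fun k => if k = i then -(x k) else x k)
      (fun x => x i * x j)
      (neg_meas i) (neg_map i)
      (neg_sum i)
      ((hmeasi i).mul (hmeasi j))
    simp only [eq_self_iff_true, if_true, if_neg (Ne.symm hij)] at h
    have : ∫ x, -(x i) * x j ∂μc = -∫ x, x i * x j ∂μc := by
      rw [← integral_neg]; congr 1; funext x; ring
    rw [this] at h
    linarith
  set V : ℝ := ∫ x, (x i0) * (x i0) ∂μc with hV
  have hVnn : 0 ≤ V := by
    rw [hV]
    exact integral_nonneg fun x => mul_self_nonneg _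
  have diag_eq : ∀ i : Fin K, ∫ x, x i * x i ∂μc = V := by
    intro i
    have h := key (fun x : Fin K → ℝ => x ∘ Equiv.swap i i0)
      (fun x => x i * x i)
      (by fun_prop) (swap_map i)
      (fun x => Fintype.sum_equiv (Equiv.swap i i0) _ _ fun k => rfl)
      ((hmeasi i).mul (hmeasi i))
    simp only [Function.comp_apply, Equiv.swap_apply_left] at h
    rw [hV]
    exact h
  -- main variance formula
  have main : ∀ b : Fin K → ℝ,
      variance (fun x => b ⬝ᵥ x) μc = (∑ k, (b k) ^ 2) * V := by
    intro b
    have hfm : Measurable fun x : Fin K → ℝ => b ⬝ᵥ x := by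
      unfold dotProduct
      exact Finset.measurable_sum _ fun k _ => (hmeasi k).const_mul _
    have hbd : ∀ x ∈ S, ‖b ⬝ᵥ x‖ ≤ (∑ k, |b k|) * Real.sqrt a := by
      intro x hx
      calc ‖b ⬝ᵥ x‖ = |∑ k, b k * x k| := rfl
        _ ≤ ∑ k, |b k * x k| := Finset.abs_sum_le_sum_abs _ _
        _ ≤ ∑ k, |b k| * Real.sqrt a := by
          refine Finset.sum_le_sum fun k _ => ?_
          rw [abs_mul]
          exact mul_le_mul_of_nonneg_left (habs x hx k) (abs_nonneg _)
        _ = (∑ k, |b k|) * Real.sqrt a := by rw [← Finset.sum_mul]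
    have hmem2 : MemLp (fun x => b ⬝ᵥ x) 2 μc :=
      MemLp.of_bound hfm.aestronglyMeasurable _ (hmemS.mono fun x hx => hbd x hx)
    rw [variance_eq_sub hmem2]
    have hmean : ∫ x, b ⬝ᵥ x ∂μc = 0 := by
      have : ∀ x : Fin K → ℝ, b ⬝ᵥ x = ∑ k, b k * x k := fun x => rfl
      simp only [this]
      rw [integral_finset_sum _ fun k _ => (hint_i k).const_mul _]
      simp only [integral_const_mul, mean_zero, mul_zero, Finset.sum_const_zero]
    have hsq : ∫ x, ((fun x => b ⬝ᵥ x) ^ 2) x ∂μc = (∑ k, (b k) ^ 2) * V := by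
      have hexp : ∀ x : Fin K → ℝ,
          ((fun x => b ⬝ᵥ x) ^ 2) x = ∑ i, ∑ j, (b i * b j) * (x i * x j) := by
        intro x
        simp only [Pi.pow_apply]
        rw [sq]
        show (∑ i, b i * x i) * (∑ j, b j * x j) = _
        rw [Finset.sum_mul_sum]
        exact Finset.sum_congr rfl fun i _ => Finset.sum_congr rfl fun j _ => by ring
      simp only [hexp]
      rw [integral_finset_sum _ fun i _ => ?_]
      swap
      · exact integrable_finset_sum _ fun j _ => (hint_ij i j).const_mul _
      have : ∀ i, ∫ x, ∑ j, (b i * b j) * (x i * x j) ∂μc = (b i) ^ 2 * V := by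
        intro i
        rw [integral_finset_sum _ fun j _ => (hint_ij i j).const_mul _]
        have : ∀ j, ∫ x, (b i * b j) * (x i * x j) ∂μc
            = (b i * b j) * ∫ x, x i * x j ∂μc := fun j => integral_const_mul _ _
        simp only [this]
        rw [Finset.sum_eq_single i]
        · rw [diag_eq i]; ring
        · intro j _ hji
          rw [cross_zero i j (Ne.symm hji), mul_zero]
        · intro h; exact absurd (Finset.mem_univ i) h
      simp only [this]
      rw [← Finset.sum_mul]
    rw [hsq, hmean]
    ring
  -- rewrite both sides using main
  have hlhs : (fun x : Fin K → ℝ => u ⬝ᵥ H.mulVec x) = fun x => (H *ᵥ u) ⬝ᵥ x := by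
    funext x
    rw [Matrix.dotProduct_mulVec, ← Matrix.mulVec_transpose, hHsymm]
  rw [hlhs, main, main]
  -- algebra: ∑ (H *ᵥ u)² ≤ ∑ u²
  set w : Fin K → ℝ := H *ᵥ u with hw
  have hHw : H *ᵥ w = w := by
    rw [hw, Matrix.mulVec_mulVec, hHidem]
  have hww : ∑ k, w k * w k = ∑ k, u k * w k := by
    have h1 : w ⬝ᵥ w = u ⬝ᵥ w := by
      conv_lhs => rw [hw, dotProduct_comm, Matrix.dotProduct_mulVec,
        ← Matrix.mulVec_transpose, hHsymm, hHw]
      rw [dotProduct_comm]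
    simpa [dotProduct] using h1
  have hineq : ∑ k, (w k) ^ 2 ≤ ∑ k, (u k) ^ 2 := by
    have h0 : (0:ℝ) ≤ ∑ k, (u k - w k) ^ 2 :=
      Finset.sum_nonneg fun k _ => sq_nonneg _
    have hww2 : ∑ k, (w k) ^ 2 = ∑ k, u k * w k := by
      simpa [pow_two] using hww
    have hexp : ∑ k, (u k - w k) ^ 2
        = ∑ k, (u k) ^ 2 + ∑ k, (w k) ^ 2 - 2 * ∑ k, u k * w k := by
      calc ∑ k, (u k - w k) ^ 2
          = ∑ k, ((u k) ^ 2 + (w k) ^ 2 - 2 * (u k * w k)) :=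
            Finset.sum_congr rfl fun k _ => by ring
        _ = (∑ k, ((u k) ^ 2 + (w k) ^ 2)) - ∑ k, 2 * (u k * w k) :=
            Finset.sum_sub_distrib _ _
        _ = ∑ k, (u k) ^ 2 + ∑ k, (w k) ^ 2 - 2 * ∑ k, u k * w k := by
            rw [Finset.sum_add_distrib, ← Finset.mul_sum]
    linarith
  exact mul_le_mul_of_nonneg_right hineq hVnn
end

section
/- Let V_xx = diag(v_1,...,v_K) be a positive diagonal matrix and v_τx = (t_1,...,t_K) with all t_k ≠ 0, and let R_k² = t_k²/(v_ττ v_k) with R² = ∑_k R_k². Over positive diagonal matrices A = diag(w_1,...,w_K), the quantity ν(A) = [v_τx V_xx^{−1} A^{−1} V_xx^{−1} v_xτ · det(A)^{1/K} det(V_xx)^{1/K}] / (v_τx V_xx^{−1} v_xτ) is minimized at w_k ∝ R_k²/v_k, and the minimum value is K(∏_{k=1}^K R_k²)^{1/K} / R². -/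
open Matrix Finset

/-- The efficiency factor `ν(A)` of a quadratic-form rerandomization criterion
with weighting matrix `A = diag(w)`, for `V_xx = diag(v)` and `v_τx = t`:
`ν(A) = [t V_xx⁻¹ A⁻¹ V_xx⁻¹ tᵀ · det(A)^{1/K} det(V_xx)^{1/K}] / (t V_xx⁻¹ tᵀ)`. -/
noncomputable def nuDiag (K : ℕ) (t v w : Fin K → ℝ) : ℝ :=
  (t ⬝ᵥ (Matrix.diagonal v)⁻¹.mulVec ((Matrix.diagonal w)⁻¹.mulVec
      ((Matrix.diagonal v)⁻¹.mulVec t))) *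
    (Matrix.diagonal w).det ^ (1 / (K : ℝ)) * (Matrix.diagonal v).det ^ (1 / (K : ℝ)) /
    (t ⬝ᵥ (Matrix.diagonal v)⁻¹.mulVec t)

lemma diag_inv_aux {K : ℕ} (u : Fin K → ℝ) (hu : ∀ k, u k ≠ 0) :
    (Matrix.diagonal u)⁻¹ = Matrix.diagonal (fun k => (u k)⁻¹) := by
  apply Matrix.inv_eq_left_inv
  rw [Matrix.diagonal_mul_diagonal]
  have : (fun k => (u k)⁻¹ * u k) = fun _ => (1:ℝ) := funext fun k => inv_mul_cancel₀ (hu k)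
  rw [this, Matrix.diagonal_one]

lemma nuDiag_eq_aux (K : ℕ) (t v w : Fin K → ℝ) (hv : ∀ k, v k ≠ 0) (hw : ∀ k, w k ≠ 0) :
    nuDiag K t v w =
      (∑ k, t k ^ 2 / (v k ^ 2 * w k)) * (∏ k, w k) ^ (1 / (K : ℝ)) *
        (∏ k, v k) ^ (1 / (K : ℝ)) / (∑ k, t k ^ 2 / v k) := by
  unfold nuDiag
  rw [diag_inv_aux v hv, diag_inv_aux w hw, Matrix.det_diagonal, Matrix.det_diagonal]
  simp only [dotProduct, Matrix.mulVec_diagonal]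
  have h1 : (∑ k, t k * ((v k)⁻¹ * ((w k)⁻¹ * ((v k)⁻¹ * t k)))) =
      ∑ k, t k ^ 2 / (v k ^ 2 * w k) :=
    Finset.sum_congr rfl fun k _ => by field_simp
  have h2 : (∑ k, t k * ((v k)⁻¹ * t k)) = ∑ k, t k ^ 2 / v k :=
    Finset.sum_congr rfl fun k _ => by field_simp
  rw [h1, h2]

lemma amgm_aux {K : ℕ} (hK : 0 < K) (x : Fin K → ℝ) (hx : ∀ k, 0 < x k) :
    (K : ℝ) * (∏ k, x k) ^ (1 / (K : ℝ)) ≤ ∑ k, x k := by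
  have hKR : (0:ℝ) < K := Nat.cast_pos.mpr hK
  have h := Real.geom_mean_le_arith_mean_weighted Finset.univ (fun _ => 1/(K:ℝ)) x
    (fun _ _ => by positivity)
    (by simp [Finset.card_univ]; field_simp)
    (fun k _ => (hx k).le)
  have hprod : (∏ k, x k ^ (1/(K:ℝ))) = (∏ k, x k) ^ (1/(K:ℝ)) :=
    Real.finset_prod_rpow _ _ (fun k _ => (hx k).le) _
  rw [hprod] at h
  have hs : (∑ k, (1/(K:ℝ)) * x k) = (∑ k, x k) / K := by
    rw [← Finset.mul_sum]; ring
  rw [hs] at h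
  calc (K:ℝ) * (∏ k, x k) ^ (1/(K:ℝ)) ≤ (K:ℝ) * ((∑ k, x k) / K) :=
        mul_le_mul_of_nonneg_left h hKR.le
    _ = ∑ k, x k := by field_simp

lemma rpow_pow_inv_aux {K : ℕ} (hK : 0 < K) (a : ℝ) (ha : 0 ≤ a) :
    (a ^ K) ^ (1 / (K : ℝ)) = a := by
  rw [← Real.rpow_natCast a K, ← Real.rpow_mul ha, mul_one_div, div_self, Real.rpow_one]
  exact_mod_cast hK.ne'

lemma key_eq_aux {K : ℕ} (t v w : Fin K → ℝ) (hv : ∀ k, 0 < v k) (hw : ∀ k, 0 < w k) :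
    (∏ k, t k ^ 2 / (v k ^ 2 * w k)) ^ (1 / (K : ℝ)) * (∏ k, w k) ^ (1 / (K : ℝ)) *
      (∏ k, v k) ^ (1 / (K : ℝ)) = (∏ k, t k ^ 2 / v k) ^ (1 / (K : ℝ)) := by
  have hA : (0:ℝ) ≤ ∏ k, t k ^ 2 / (v k ^ 2 * w k) :=
    Finset.prod_nonneg fun k _ => div_nonneg (sq_nonneg _)
      (by have := hv k; have := hw k; positivity)
  have hB : (0:ℝ) ≤ ∏ k, w k := Finset.prod_nonneg fun k _ => (hw k).le
  have hC : (0:ℝ) ≤ ∏ k, v k := Finset.prod_nonneg fun k _ => (hv k).le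
  rw [← Real.mul_rpow hA hB, ← Real.mul_rpow (mul_nonneg hA hB) hC,
      ← Finset.prod_mul_distrib, ← Finset.prod_mul_distrib]
  congr 1
  refine Finset.prod_congr rfl fun k _ => ?_
  have h1 := (hv k).ne'
  have h2 := (hw k).ne'
  field_simp

/-- For orthogonalized covariates (`V_xx = diag(v)` positive, `t_k ≠ 0`, with
`R_k² = t_k²/(v_ττ v_k)`), over positive diagonal weighting matrices `ν` is minimized
at `w_k ∝ R_k²/v_k`, with minimum `K (∏ R_k²)^{1/K} / ∑ R_k²`. -/
theorem stmt18 (K : ℕ) (hK : 0 < K) (vττ : ℝ) (hvττ : 0 < vττ)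
    (t v : Fin K → ℝ) (hv : ∀ k, 0 < v k) (ht : ∀ k, t k ≠ 0) :
    (∀ w : Fin K → ℝ, (∀ k, 0 < w k) →
        (K : ℝ) * (∏ k, t k ^ 2 / (vττ * v k)) ^ (1 / (K : ℝ)) /
            (∑ k, t k ^ 2 / (vττ * v k)) ≤ nuDiag K t v w) ∧
      ∀ c : ℝ, 0 < c →
        nuDiag K t v (fun k => c * (t k ^ 2 / (vττ * v k)) / v k) =
          (K : ℝ) * (∏ k, t k ^ 2 / (vττ * v k)) ^ (1 / (K : ℝ)) /
            (∑ k, t k ^ 2 / (vττ * v k)) := by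
  have hKR : (0:ℝ) < K := Nat.cast_pos.mpr hK
  have htp : ∀ k, 0 < t k ^ 2 := fun k => by have := ht k; positivity
  have hS' : 0 < ∑ k, t k ^ 2 / v k :=
    Finset.sum_pos (fun k _ => div_pos (htp k) (hv k)) (Finset.univ_nonempty_iff.mpr ⟨⟨0, hK⟩⟩)
  -- rewrite RHS target
  have hRHS : (K : ℝ) * (∏ k, t k ^ 2 / (vττ * v k)) ^ (1 / (K : ℝ)) /
      (∑ k, t k ^ 2 / (vττ * v k)) =
      (K : ℝ) * (∏ k, t k ^ 2 / v k) ^ (1 / (K : ℝ)) / (∑ k, t k ^ 2 / v k) := by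
    have hprod : (∏ k, t k ^ 2 / (vττ * v k)) = vττ⁻¹ ^ K * ∏ k, t k ^ 2 / v k := by
      calc (∏ k, t k ^ 2 / (vττ * v k)) = ∏ k, vττ⁻¹ * (t k ^ 2 / v k) :=
            Finset.prod_congr rfl fun k _ => by
              have := (hv k).ne'; field_simp
        _ = (∏ _k : Fin K, vττ⁻¹) * ∏ k, t k ^ 2 / v k := Finset.prod_mul_distrib
        _ = vττ⁻¹ ^ K * ∏ k, t k ^ 2 / v k := by
            rw [Finset.prod_const, Finset.card_univ, Fintype.card_fin]
    have hsum : (∑ k, t k ^ 2 / (vττ * v k)) = vττ⁻¹ * ∑ k, t k ^ 2 / v k := by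
      rw [Finset.mul_sum]
      refine Finset.sum_congr rfl fun k _ => ?_
      have := (hv k).ne'; field_simp
    rw [hprod, hsum, Real.mul_rpow (by positivity) (Finset.prod_nonneg fun k _ => div_nonneg (sq_nonneg _) (hv k).le),
      rpow_pow_inv_aux hK vττ⁻¹ (by positivity)]
    rw [div_eq_div_iff (by positivity) hS'.ne']
    ring
  rw [hRHS] at *
  constructor
  · intro w hw
    rw [nuDiag_eq_aux K t v w (fun k => (hv k).ne') (fun k => (hw k).ne')]
    have hx : ∀ k, 0 < t k ^ 2 / (v k ^ 2 * w k) := fun k => by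
      have := htp k; have := hv k; have := hw k; positivity
    have hkey := key_eq_aux t v w hv hw
    calc (K : ℝ) * (∏ k, t k ^ 2 / v k) ^ (1 / (K : ℝ)) / (∑ k, t k ^ 2 / v k)
        = ((K : ℝ) * (∏ k, t k ^ 2 / (v k ^ 2 * w k)) ^ (1 / (K : ℝ))) *
            ((∏ k, w k) ^ (1 / (K : ℝ)) * (∏ k, v k) ^ (1 / (K : ℝ))) /
            (∑ k, t k ^ 2 / v k) := by rw [← hkey]; ring
      _ ≤ (∑ k, t k ^ 2 / (v k ^ 2 * w k)) *
            ((∏ k, w k) ^ (1 / (K : ℝ)) * (∏ k, v k) ^ (1 / (K : ℝ))) /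
            (∑ k, t k ^ 2 / v k) := by
          have hmul : (0:ℝ) ≤ (∏ k, w k) ^ (1 / (K : ℝ)) * (∏ k, v k) ^ (1 / (K : ℝ)) := by
            have : (0:ℝ) ≤ ∏ k, w k := Finset.prod_nonneg fun k _ => (hw k).le
            have : (0:ℝ) ≤ ∏ k, v k := Finset.prod_nonneg fun k _ => (hv k).le
            positivity
          exact (div_le_div_iff_of_pos_right hS').mpr
            (mul_le_mul_of_nonneg_right (amgm_aux hK _ hx) hmul)
      _ = (∑ k, t k ^ 2 / (v k ^ 2 * w k)) * (∏ k, w k) ^ (1 / (K : ℝ)) *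
            (∏ k, v k) ^ (1 / (K : ℝ)) / (∑ k, t k ^ 2 / v k) := by ring
  · intro c hc
    set w : Fin K → ℝ := fun k => c * (t k ^ 2 / (vττ * v k)) / v k with hwdef
    have hw : ∀ k, 0 < w k := fun k => by
      have := htp k; have := hv k; positivity
    rw [nuDiag_eq_aux K t v w (fun k => (hv k).ne') (fun k => (hw k).ne')]
    have hx : ∀ k, t k ^ 2 / (v k ^ 2 * w k) = vττ / c := by
      intro k
      have h1 := (hv k).ne'
      have h2 := (htp k).ne'
      have h3 := ht k
      simp only [hwdef]
      field_simp
    have hsum : (∑ k, t k ^ 2 / (v k ^ 2 * w k)) = K * (vττ / c) := by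
      simp [hx, Finset.sum_const, Finset.card_univ]
    have hprodx : (∏ k, t k ^ 2 / (v k ^ 2 * w k)) ^ (1 / (K : ℝ)) = vττ / c := by
      rw [Finset.prod_congr rfl fun k _ => hx k, Finset.prod_const, Finset.card_univ,
        Fintype.card_fin]
      exact rpow_pow_inv_aux hK _ (by positivity)
    have hkey := key_eq_aux t v w hv hw
    rw [hsum]
    rw [show (K:ℝ) * (vττ / c) * (∏ k, w k) ^ (1 / (K : ℝ)) * (∏ k, v k) ^ (1 / (K : ℝ))
        = (K:ℝ) * ((vττ / c) * (∏ k, w k) ^ (1 / (K : ℝ)) * (∏ k, v k) ^ (1 / (K : ℝ))) by ring,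
      ← hprodx, hkey]
end
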